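/- Let (Ω, F, (F_t)_{t≥0}, P) be a filtered probability space and (Ω, F̃, (F̃_t)_{t≥0}, P̃) its N-augmentation. Assume that for every coherent family of probability measures (Q_t)_{t≥0} with Q_t defined on F_t, there exists a unique probability measure Q on F coinciding with Q_t on F_t for all t ≥ 0. Then for every coherent family of probability measures (Q̃_t)_{t≥0} such that Q̃_t is defined on F̃_t and is absolutely continuous with respect to the restriction of P̃ to F̃_t, there exists a unique probability measure Q̃ on F̃ coinciding with Q̃_t on F̃_t for all t ≥ 0. -/

import Mathlib

/-! Restricting the `Q̃ₜ` to `𝓕 t` gives a coherent family, hence a measure `Q` on `F`. By local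
absolute continuity every measure agreeing with the `Q̃ₜ` on the `𝓕 n` vanishes on N-negligible
sets; in particular `Q` does, so the outer measure of `Q` is a measure `Q̃` on `F̃ = σ(F ∪ N)`.
Since `F_{t+} ⊆ 𝓕 (t + 1)`, `Q̃` and `Q̃ₜ` agree on the π-system `F_{t+} ∪ N` generating `F̃ₜ`.
Any other extension restricts to `Q` on `F` by uniqueness of `Q`, also vanishes on N, hence agrees
with `Q̃` on the π-system `F ∪ N` generating `F̃`. -/

open MeasureTheory Set Filter
open scoped NNReal ENNReal

variable {Ω : Type*}

/-- A set `A` is N-negligible with respect to the filtration `𝓕` and the set function `P`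
(the outer-measure attached to a probability measure): it is covered by countably many
sets `B n` with `B n ∈ 𝓕 n` and `P (B n) = 0`. -/
def NNegligible (𝓕 : ℝ≥0 → MeasurableSpace Ω) (P : Set Ω → ℝ≥0∞) (A : Set Ω) : Prop :=
  ∃ B : ℕ → Set Ω, (∀ n : ℕ, MeasurableSet[𝓕 (n : ℝ≥0)] (B n)) ∧
    (∀ n : ℕ, P (B n) = 0) ∧ A ⊆ ⋃ n, B n

namespace NNegligible

variable {𝓕 : ℝ≥0 → MeasurableSpace Ω} {P : Set Ω → ℝ≥0∞}

lemma mono ⦃A B : Set Ω⦄ (hAB : A ⊆ B) (hB : NNegligible 𝓕 P B) : NNegligible 𝓕 P A :=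
  hB.imp fun _ ⟨hC, hPC, hBC⟩ => ⟨hC, hPC, hAB.trans hBC⟩

lemma measure_eq_zero {m : MeasurableSpace Ω} {μ : Measure[m] Ω} {A : Set Ω}
    (hμ : ∀ n : ℕ, ∀ s, MeasurableSet[𝓕 n] s → P s = 0 → μ s = 0)
    (hA : NNegligible 𝓕 P A) : μ A = 0 :=
  let ⟨_, hC, hPC, hAC⟩ := hA
  measure_mono_null hAC (measure_iUnion_null fun n => hμ n _ (hC n) (hPC n))

end NNegligible

def IsCoherent {ι : Type*} [Preorder ι] (𝓕 : ι → MeasurableSpace Ω)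
    (Q : (t : ι) → Measure[𝓕 t] Ω) : Prop :=
  ∀ s t, s ≤ t → ∀ A, MeasurableSet[𝓕 s] A → Q t A = Q s A

lemma IsCoherent.trim {ι : Type*} [Preorder ι] {𝓕 𝓖 : ι → MeasurableSpace Ω}
    {Q : (t : ι) → Measure[𝓖 t] Ω} (hQ : IsCoherent 𝓖 Q) (h𝓕 : Monotone 𝓕)
    (h : ∀ t, 𝓕 t ≤ 𝓖 t) : IsCoherent 𝓕 fun t => (Q t).trim (h t) := by
  intro s t hst A hA
  rw [trim_measurableSet_eq _ (h𝓕 hst A hA), trim_measurableSet_eq _ hA]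
  exact hQ s t hst A (h s A hA)

namespace MeasurableSpace

abbrev augment (m : MeasurableSpace Ω) (N : Set (Set Ω)) : MeasurableSpace Ω :=
  generateFrom ({s | MeasurableSet[m] s} ∪ N)

variable {m m' : MeasurableSpace Ω} {N : Set (Set Ω)}

lemma le_augment (m : MeasurableSpace Ω) (N : Set (Set Ω)) : m ≤ augment m N :=
  fun _ hs => measurableSet_generateFrom (Or.inl hs)

lemma measurableSet_augment_of_mem {s : Set Ω} (hs : s ∈ N) : MeasurableSet[augment m N] s :=
  measurableSet_generateFrom (Or.inr hs)

lemma augment_mono (h : m ≤ m') : augment m N ≤ augment m' N :=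
  generateFrom_mono (union_subset_union_left _ h)

lemma isPiSystem_measurableSet_union (hN : ∀ ⦃s t⦄, s ⊆ t → t ∈ N → s ∈ N) :
    IsPiSystem ({s | MeasurableSet[m] s} ∪ N) := by
  rintro s (hs | hs) t (ht | ht) -
  · exact Or.inl (hs.inter ht)
  · exact Or.inr (hN inter_subset_right ht)
  all_goals exact Or.inr (hN inter_subset_left hs)

variable {𝓕 : ℝ≥0 → MeasurableSpace Ω}

lemma le_augment_iInf_Ioi (h𝓕 : Monotone 𝓕) (t : ℝ≥0) :
    𝓕 t ≤ augment (⨅ u ∈ Ioi t, 𝓕 u) N :=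
  le_trans (le_iInf₂ fun _ hu => h𝓕 (le_of_lt hu) : 𝓕 t ≤ ⨅ u ∈ Ioi t, 𝓕 u) (le_augment _ N)

lemma augment_iInf_Ioi_le (h𝓕 : ∀ t, 𝓕 t ≤ m) (t : ℝ≥0) :
    augment (⨅ u ∈ Ioi t, 𝓕 u) N ≤ augment m N :=
  augment_mono ((iInf₂_le (t + 1) (lt_add_one t)).trans (h𝓕 (t + 1)))

end MeasurableSpace

open MeasurableSpace

namespace MeasureTheory

lemma OuterMeasure.isCaratheodory_of_null {μ : OuterMeasure Ω} {s : Set Ω} (hs : μ s = 0) :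
    μ.IsCaratheodory s := by
  rw [OuterMeasure.isCaratheodory_iff_le']
  intro t
  rw [measure_mono_null inter_subset_right hs, zero_add]
  exact measure_mono sdiff_subset

lemma isProbabilityMeasure_trim {m m0 : MeasurableSpace Ω} {μ : Measure[m0] Ω}
    [IsProbabilityMeasure μ] (hm : m ≤ m0) : IsProbabilityMeasure (μ.trim hm) :=
  ⟨by rw [trim_measurableSet_eq _ .univ, measure_univ]⟩

namespace Measure

/-- `ν` is the outer measure of `μ`, for which `μ`-null sets are Carathéodory-measurable. -/
lemma exists_eq_on_augment {m' m : MeasurableSpace Ω} (μ : Measure[m] Ω)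
    {N : Set (Set Ω)} (hN : ∀ s ∈ N, μ s = 0) (hm' : m' ≤ augment m N) :
    ∃ ν : Measure[m'] Ω, ∀ s, MeasurableSet[m'] s → ν s = μ s := by
  have hcar : m' ≤ μ.toOuterMeasure.caratheodory := hm'.trans <| generateFrom_le <| by
    rintro s (hs | hs)
    · exact le_toOuterMeasure_caratheodory μ s hs
    · exact OuterMeasure.isCaratheodory_of_null (hN s hs)
  exact ⟨@OuterMeasure.toMeasure _ m' _ hcar, fun s hs => @toMeasure_apply _ m' _ hcar s hs⟩

lemma ext_of_eq_augment {m m0 : MeasurableSpace Ω} {N : Set (Set Ω)}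
    (hN : ∀ ⦃s t⦄, s ⊆ t → t ∈ N → s ∈ N) (hm0 : m0 = augment m N)
    {μ ν : Measure[m0] Ω} [IsFiniteMeasure μ] (hμν : ∀ s, MeasurableSet[m] s → μ s = ν s)
    (hμ : ∀ s ∈ N, μ s = 0) (hν : ∀ s ∈ N, ν s = 0) : μ = ν :=
  ext_of_generate_finite _ hm0 (isPiSystem_measurableSet_union hN)
    (fun s hs => hs.elim (hμν s) fun hs => (hμ s hs).trans (hν s hs).symm) (hμν _ .univ)

/-- On the generators `𝓕 (t+) ⊆ 𝓕 (t + 1)` of `𝓖 t`, both sides equal `Q (t + 1)` by coherence. -/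
lemma eq_of_measurableSet_augment_iInf_Ioi {m0 : MeasurableSpace Ω}
    {𝓕 𝓖 : ℝ≥0 → MeasurableSpace Ω} {N : Set (Set Ω)} (hN : ∀ ⦃s t⦄, s ⊆ t → t ∈ N → s ∈ N)
    (h𝓖 : ∀ t, 𝓖 t = augment (⨅ u ∈ Ioi t, 𝓕 u) N) (h𝓖_le : ∀ t, 𝓖 t ≤ m0)
    {Q : (t : ℝ≥0) → Measure[𝓖 t] Ω} (hQ : IsCoherent 𝓖 Q) (hQN : ∀ t, ∀ s ∈ N, Q t s = 0)
    {μ : Measure[m0] Ω} [IsFiniteMeasure μ] (hμQ : ∀ t A, MeasurableSet[𝓕 t] A → μ A = Q t A)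
    (hμN : ∀ s ∈ N, μ s = 0) (t : ℝ≥0) {A : Set Ω} (hA : MeasurableSet[𝓖 t] A) :
    μ A = Q t A := by
  have h_trim : μ.trim (h𝓖_le t) = Q t := by
    refine ext_of_eq_augment hN (h𝓖 t) (fun s hs => ?_) (fun s hs => ?_) (hQN t)
    · have hs_succ : MeasurableSet[𝓕 (t + 1)] s :=
        (iInf₂_le (t + 1) (lt_add_one t) : (⨅ u ∈ Ioi t, 𝓕 u) ≤ 𝓕 (t + 1)) s hs
      have hs' : MeasurableSet[𝓖 t] s := h𝓖 t ▸ le_augment _ N s hs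
      rw [trim_measurableSet_eq _ hs', hμQ _ s hs_succ]
      exact hQ t (t + 1) le_self_add s hs'
    · rw [trim_measurableSet_eq _ (h𝓖 t ▸ measurableSet_augment_of_mem hs)]
      exact hμN s hs
  rw [← h_trim, trim_measurableSet_eq _ hA]

end Measure

end MeasureTheory

theorem n_augmentation_extension_general
    (F : MeasurableSpace Ω) (𝓕 : ℝ≥0 → MeasurableSpace Ω)
    (h_mono : Monotone 𝓕) (h_le : ∀ t, 𝓕 t ≤ F)
    (P : @Measure Ω F)
    (𝓝neg : Set (Set Ω)) (h𝓝 : 𝓝neg = {A | NNegligible 𝓕 (fun s => P s) A})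
    (Ftil : MeasurableSpace Ω)
    (hFtil : Ftil = MeasurableSpace.generateFrom ({A | MeasurableSet[F] A} ∪ 𝓝neg))
    (𝓕til : ℝ≥0 → MeasurableSpace Ω)
    (h𝓕til : ∀ t : ℝ≥0, 𝓕til t =
      MeasurableSpace.generateFrom
        ({A | MeasurableSet[⨅ u ∈ Set.Ioi t, 𝓕 u] A} ∪ 𝓝neg))
    (Ptil : @Measure Ω Ftil)
    (hPtil : ∀ A : Set Ω, MeasurableSet[F] A → Ptil A = P A)
    (hext : ∀ Q : (t : ℝ≥0) → @Measure Ω (𝓕 t),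
      (∀ t : ℝ≥0, @IsProbabilityMeasure Ω (𝓕 t) (Q t)) →
      (∀ s t : ℝ≥0, s ≤ t → ∀ A : Set Ω, MeasurableSet[𝓕 s] A → Q t A = Q s A) →
      ∃! Qq : @Measure Ω F, ∀ t : ℝ≥0, ∀ A : Set Ω,
        MeasurableSet[𝓕 t] A → Qq A = Q t A) :
    ∀ Qt : (t : ℝ≥0) → @Measure Ω (𝓕til t),
      (∀ t : ℝ≥0, @IsProbabilityMeasure Ω (𝓕til t) (Qt t)) →
      (∀ s t : ℝ≥0, s ≤ t → ∀ A : Set Ω, MeasurableSet[𝓕til s] A → Qt t A = Qt s A) →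
      (∀ t : ℝ≥0, ∀ A : Set Ω, MeasurableSet[𝓕til t] A → Ptil A = 0 → Qt t A = 0) →
      ∃! Qq : @Measure Ω Ftil, ∀ t : ℝ≥0, ∀ A : Set Ω,
        MeasurableSet[𝓕til t] A → Qq A = Qt t A := by
  intro Qt hQt_prob hQt_coh hQt_ac
  subst h𝓝
  have hF_le : F ≤ Ftil := hFtil ▸ le_augment F _
  have h𝓕_le (t : ℝ≥0) : 𝓕 t ≤ 𝓕til t := h𝓕til t ▸ le_augment_iInf_Ioi h_mono t
  have h𝓕til_le (t : ℝ≥0) : 𝓕til t ≤ Ftil := hFtil ▸ h𝓕til t ▸ augment_iInf_Ioi_le h_le t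
  -- `Qt` is locally absolutely continuous with respect to `Ptil`, which agrees with `P` on `F`
  have hnull {m : MeasurableSpace Ω} {R : Measure[m] Ω}
      (hR : ∀ n : ℕ, ∀ A, MeasurableSet[𝓕 n] A → R A = Qt n A) (s : Set Ω)
      (hs : NNegligible 𝓕 (fun s => P s) s) : R s = 0 :=
    hs.measure_eq_zero fun n A hA hPA => (hR n A hA).trans <|
      hQt_ac n A (h𝓕_le n A hA) ((hPtil A (h_le n A hA)).trans hPA)
  obtain ⟨Q, hQ, hQ_unique⟩ := hext (fun t => (Qt t).trim (h𝓕_le t))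
    (fun t => isProbabilityMeasure_trim (h𝓕_le t)) (IsCoherent.trim hQt_coh h_mono h𝓕_le)
  replace hQ (t : ℝ≥0) (A : Set Ω) (hA : MeasurableSet[𝓕 t] A) : Q A = Qt t A :=
    (hQ t A hA).trans (trim_measurableSet_eq _ hA)
  obtain ⟨Qtil, hQtil⟩ := Q.exists_eq_on_augment (hnull fun n => hQ n) hFtil.le
  have : IsProbabilityMeasure Qtil := ⟨by rw [hQtil _ .univ, hQ 0 _ .univ, measure_univ]⟩
  have hQtil_eq (t : ℝ≥0) (A : Set Ω) (hA : MeasurableSet[𝓕 t] A) : Qtil A = Qt t A :=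
    (hQtil A (hF_le A (h_le t A hA))).trans (hQ t A hA)
  have hQtil_null := hnull fun n => hQtil_eq n
  have hQt_null (t : ℝ≥0) (s : Set Ω) (hs : NNegligible 𝓕 (fun s => P s) s) : Qt t s = 0 :=
    hQt_ac t s (h𝓕til t ▸ measurableSet_augment_of_mem hs)
      (hs.measure_eq_zero fun n A hA hPA => (hPtil A (h_le n A hA)).trans hPA)
  refine ⟨Qtil, Qtil.eq_of_measurableSet_augment_iInf_Ioi NNegligible.mono h𝓕til h𝓕til_le
    hQt_coh hQt_null hQtil_eq hQtil_null, fun R hR => ?_⟩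
  have hR_trim : R.trim hF_le = Q := hQ_unique _ fun t A hA => by
    rw [trim_measurableSet_eq _ (h_le t A hA), trim_measurableSet_eq _ hA]
    exact hR t A (h𝓕_le t A hA)
  refine (Measure.ext_of_eq_augment NNegligible.mono hFtil (fun s hs => ?_)
    hQtil_null (hnull fun n A hA => hR n A (h𝓕_le n A hA))).symm
  rw [hQtil s (hF_le s hs), ← hR_trim, trim_measurableSet_eq _ hs]

/-- If every coherent family of probability measures on the filtration `(𝓕 t)` extends
uniquely to `F`, then every coherent family of probability measures on the N-augmented
filtration `(F̃ₜ)` that is locally absolutely continuous with respect to `P̃` extends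
uniquely to `F̃`. -/
theorem n_augmentation_extension
    (F : MeasurableSpace Ω) (𝓕 : ℝ≥0 → MeasurableSpace Ω)
    (h_mono : Monotone 𝓕) (h_le : ∀ t, 𝓕 t ≤ F)
    (P : @Measure Ω F) (hP : @IsProbabilityMeasure Ω F P)
    (𝓝neg : Set (Set Ω)) (h𝓝 : 𝓝neg = {A | NNegligible 𝓕 (fun s => P s) A})
    (Ftil : MeasurableSpace Ω)
    (hFtil : Ftil = MeasurableSpace.generateFrom ({A | MeasurableSet[F] A} ∪ 𝓝neg))
    (𝓕til : ℝ≥0 → MeasurableSpace Ω)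
    (h𝓕til : ∀ t : ℝ≥0, 𝓕til t =
      MeasurableSpace.generateFrom
        ({A | MeasurableSet[⨅ u ∈ Set.Ioi t, 𝓕 u] A} ∪ 𝓝neg))
    (Ptil : @Measure Ω Ftil)
    (hPtil : ∀ A : Set Ω, MeasurableSet[F] A → Ptil A = P A)
    (hext : ∀ Q : (t : ℝ≥0) → @Measure Ω (𝓕 t),
      (∀ t : ℝ≥0, @IsProbabilityMeasure Ω (𝓕 t) (Q t)) →
      (∀ s t : ℝ≥0, s ≤ t → ∀ A : Set Ω, MeasurableSet[𝓕 s] A → Q t A = Q s A) →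
      ∃! Qq : @Measure Ω F, ∀ t : ℝ≥0, ∀ A : Set Ω,
        MeasurableSet[𝓕 t] A → Qq A = Q t A) :
    ∀ Qt : (t : ℝ≥0) → @Measure Ω (𝓕til t),
      (∀ t : ℝ≥0, @IsProbabilityMeasure Ω (𝓕til t) (Qt t)) →
      (∀ s t : ℝ≥0, s ≤ t → ∀ A : Set Ω, MeasurableSet[𝓕til s] A → Qt t A = Qt s A) →
      (∀ t : ℝ≥0, ∀ A : Set Ω, MeasurableSet[𝓕til t] A → Ptil A = 0 → Qt t A = 0) →
      ∃! Qq : @Measure Ω Ftil, ∀ t : ℝ≥0, ∀ A : Set Ω,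
        MeasurableSet[𝓕til t] A → Qq A = Qt t A :=
  n_augmentation_extension_general F 𝓕 h_mono h_le P 𝓝neg h𝓝 Ftil hFtil 𝓕til h𝓕til Ptil hPtil hext
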